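/- Uniform Sobolev bound from linear higher-Sobolev growth plus algebraic L¹ relaxation (Fourier form). Let N ≥ 1 and k ≥ 0. For an integrable function h on ℝ^N and r ∈ ℝ, write ‖h‖²_{H^r} = ∫_{ℝ^N} (1+|ξ|²)^r |ĥ(ξ)|² dξ, where ĥ is the Fourier transform of h. Let M : ℝ^N → ℝ be integrable with ‖M‖_{H^k} < ∞ and ‖M‖_{H^{2k+(N+1)/2}} < ∞, and suppose g : [0,∞) → L¹(ℝ^N) satisfies, for some constants C₀, C₁ > 0 and all t ≥ 0: ‖g(t)‖_{H^{2k+(N+1)/2}} ≤ C₀(1+t) and ‖g(t) − M‖_{L¹} ≤ C₁(1+t)^{−1}. Then there exists a finite constant C(k) (explicitly computable from C₀, C₁, N, k and the norms of M) such that ‖g(t)‖_{H^k} ≤ C(k) for all t ≥ 0. -/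

import Mathlib

open MeasureTheory Real ENNReal FourierTransform

noncomputable section

/-- Euclidean space `ℝ^N`. -/
abbrev Rn (N : ℕ) := EuclideanSpace ℝ (Fin N)

/-- The Fourier transform `ĥ(ξ) = ∫ e^{-2πi v·ξ} h(v) dv` of a real-valued function. -/
def fourierT (N : ℕ) (h : Rn N → ℝ) : Rn N → ℂ := 𝓕 (fun v => (h v : ℂ))

/-- Sobolev norm of order `r ∈ ℝ` in Fourier form:
`‖h‖_{H^r} = (∫ (1+|ξ|²)^r |ĥ(ξ)|² dξ)^{1/2}`, valued in `[0,∞]`. -/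
def fHnorm (N : ℕ) (r : ℝ) (h : Rn N → ℝ) : ℝ≥0∞ :=
  (∫⁻ ξ : Rn N, ENNReal.ofReal ((1 + ‖ξ‖ ^ 2) ^ r * ‖fourierT N h ξ‖ ^ 2)) ^ (1/2 : ℝ)

/-
Put `h = g(t) - M`. Because `|ĥ| ≤ ‖h‖_{L¹}` and `(1+|ξ|²)^{-(N+1)/2}` is integrable,
`‖h‖_{H^{-(N+1)/2}} = O((1+t)⁻¹)`, while the triangle inequality gives
`‖h‖_{H^{2k+(N+1)/2}} = O(1+t)`. Writing `(1+|ξ|²)^k |ĥ|²` as the product of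
`(1+|ξ|²)^{-(N+1)/4} |ĥ|` and `(1+|ξ|²)^{k+(N+1)/4} |ĥ|`, Cauchy–Schwarz bounds `‖h‖²_{H^k}`
by the product of these two norms, in which the powers of `1+t` cancel. Adding `‖M‖_{H^k}`
back finishes the proof.
-/

section JapaneseBracket

variable {E : Type*} [NormedAddCommGroup E]

lemma continuous_one_add_norm_sq_rpow (s : ℝ) : Continuous fun ξ : E => (1 + ‖ξ‖ ^ 2) ^ s :=
  (continuous_const.add (continuous_norm.pow 2)).rpow_const fun ξ =>
    Or.inl (by positivity : (0 : ℝ) < 1 + ‖ξ‖ ^ 2).ne'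

variable [InnerProductSpace ℝ E] [FiniteDimensional ℝ E] [MeasurableSpace E] [BorelSpace E]

lemma eLpNorm_one_add_norm_sq_rpow_lt_top (μ : Measure E) [μ.IsAddHaarMeasure] {r : ℝ}
    (hr : (Module.finrank ℝ E : ℝ) < -(2 * r)) :
    eLpNorm (fun ξ : E => (1 + ‖ξ‖ ^ 2) ^ (r / 2)) 2 μ < ⊤ := by
  refine MemLp.eLpNorm_lt_top <|
    (memLp_two_iff_integrable_sq (continuous_one_add_norm_sq_rpow _).aestronglyMeasurable).2 ?_
  refine (integrable_rpow_neg_one_add_norm_sq hr).congr (ae_of_all _ fun ξ => ?_)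
  dsimp only
  rw [← Real.rpow_mul_natCast (by positivity)]
  congr 1
  push_cast
  ring

end JapaneseBracket

def weightedFourierT (N : ℕ) (r : ℝ) (h : Rn N → ℝ) (ξ : Rn N) : ℂ :=
  (1 + ‖ξ‖ ^ 2) ^ (r / 2) • fourierT N h ξ

section

variable {N : ℕ}

lemma fourierT_add {f g : Rn N → ℝ} (hf : Integrable f) (hg : Integrable g) :
    fourierT N (f + g) = fourierT N f + fourierT N g := by
  have hsum : (fun v => ((f + g) v : ℂ)) = (fun v => (f v : ℂ)) + fun v => (g v : ℂ) :=
    funext fun v => Complex.ofReal_add (f v) (g v)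
  rw [fourierT, hsum]
  exact VectorFourier.fourierIntegral_add Real.continuous_fourierChar
    continuous_inner hf.ofReal hg.ofReal

lemma fourierT_sub {f g : Rn N → ℝ} (hf : Integrable f) (hg : Integrable g) :
    fourierT N (f - g) = fourierT N f - fourierT N g := by
  rw [eq_sub_iff_add_eq, ← fourierT_add (hf.sub hg) hg, sub_add_cancel]

lemma continuous_fourierT {h : Rn N → ℝ} (hh : Integrable h) :
    Continuous (fourierT N h) :=
  VectorFourier.fourierIntegral_continuous Real.continuous_fourierChar
    continuous_inner hh.ofReal

lemma enorm_fourierT_le (h : Rn N → ℝ) (ξ : Rn N) :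
    ‖fourierT N h ξ‖ₑ ≤ ∫⁻ v, ENNReal.ofReal |h v| := by
  refine (enorm_integral_le_lintegral_enorm _).trans_eq (lintegral_congr fun v => ?_)
  rw [← ofReal_norm, Circle.norm_smul, Complex.norm_real, Real.norm_eq_abs]

lemma continuous_weightedFourierT (r : ℝ) {h : Rn N → ℝ} (hh : Integrable h) :
    Continuous (weightedFourierT N r h) :=
  (continuous_one_add_norm_sq_rpow _).smul (continuous_fourierT hh)

lemma norm_weightedFourierT (r : ℝ) (h : Rn N → ℝ) (ξ : Rn N) :
    ‖weightedFourierT N r h ξ‖ = (1 + ‖ξ‖ ^ 2) ^ (r / 2) * ‖fourierT N h ξ‖ := by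
  rw [weightedFourierT, norm_smul, Real.norm_of_nonneg (by positivity)]

lemma fHnorm_eq_eLpNorm (r : ℝ) (h : Rn N → ℝ) :
    fHnorm N r h = eLpNorm (weightedFourierT N r h) 2 volume := by
  rw [fHnorm, eLpNorm_eq_lintegral_rpow_enorm_toReal two_ne_zero ofNat_ne_top]
  congr 1
  refine lintegral_congr fun ξ => ?_
  rw [← ofReal_norm, norm_weightedFourierT,
    ENNReal.ofReal_rpow_of_nonneg (by positivity) (by norm_num)]
  congr 1
  rw [Real.mul_rpow (by positivity) (norm_nonneg _), ← Real.rpow_mul (by positivity)]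
  norm_num

lemma fHnorm_add_le (r : ℝ) {f g : Rn N → ℝ} (hf : Integrable f) (hg : Integrable g) :
    fHnorm N r (f + g) ≤ fHnorm N r f + fHnorm N r g := by
  have hsum : weightedFourierT N r (f + g) = weightedFourierT N r f + weightedFourierT N r g := by
    ext ξ; simp [weightedFourierT, fourierT_add hf hg, smul_add]
  simp only [fHnorm_eq_eLpNorm, hsum]
  exact eLpNorm_add_le (continuous_weightedFourierT r hf).aestronglyMeasurable
    (continuous_weightedFourierT r hg).aestronglyMeasurable one_le_two

lemma fHnorm_sub_le (r : ℝ) {f g : Rn N → ℝ} (hf : Integrable f) (hg : Integrable g) :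
    fHnorm N r (f - g) ≤ fHnorm N r f + fHnorm N r g := by
  have hdiff : weightedFourierT N r (f - g) = weightedFourierT N r f - weightedFourierT N r g := by
    ext ξ; simp [weightedFourierT, fourierT_sub hf hg, smul_sub]
  simp only [fHnorm_eq_eLpNorm, hdiff]
  exact eLpNorm_sub_le (continuous_weightedFourierT r hf).aestronglyMeasurable
    (continuous_weightedFourierT r hg).aestronglyMeasurable one_le_two

lemma fHnorm_sq_le_mul {k a b : ℝ} (hab : a + b = 2 * k) {h : Rn N → ℝ}
    (hh : Integrable h) : fHnorm N k h ^ 2 ≤ fHnorm N a h * fHnorm N b h := by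
  have hsq : fHnorm N k h ^ 2 =
      eLpNorm (fun ξ => weightedFourierT N a h ξ * weightedFourierT N b h ξ) 1 volume := by
    rw [fHnorm, ← ENNReal.rpow_natCast, ← ENNReal.rpow_mul,
      show (1 / 2 : ℝ) * (2 : ℕ) = 1 by norm_num, ENNReal.rpow_one, eLpNorm_one_eq_lintegral_enorm]
    refine lintegral_congr fun ξ => ?_
    rw [← ofReal_norm, norm_mul, norm_weightedFourierT, norm_weightedFourierT]
    congr 1
    rw [mul_mul_mul_comm, ← Real.rpow_add (by positivity), ← sq, show a / 2 + b / 2 = k by linarith]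
  rw [hsq, fHnorm_eq_eLpNorm, fHnorm_eq_eLpNorm]
  simpa using eLpNorm_le_eLpNorm_mul_eLpNorm'_of_norm (p := 2) (q := 2)
    (continuous_weightedFourierT a hh).aestronglyMeasurable
    (continuous_weightedFourierT b hh).aestronglyMeasurable (· * ·) 1
    (ae_of_all _ fun ξ => by simp)

lemma fHnorm_le_mul_lintegral_abs (r : ℝ) (h : Rn N → ℝ) :
    fHnorm N r h ≤
      eLpNorm (fun ξ : Rn N => (1 + ‖ξ‖ ^ 2) ^ (r / 2)) 2 volume * ∫⁻ v, ENNReal.ofReal |h v| := by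
  rw [fHnorm_eq_eLpNorm, mul_comm]
  refine eLpNorm_le_mul_eLpNorm_of_ae_le_mul'' 2
    (continuous_one_add_norm_sq_rpow _).aestronglyMeasurable (ae_of_all _ fun ξ => ?_)
  rw [weightedFourierT, enorm_smul, mul_comm]
  gcongr
  exact enorm_fourierT_le h ξ

end

lemma ofReal_mul_inv_mul_add_le {c₀ c₁ s : ℝ} (hc₁ : 0 ≤ c₁) (hs : 1 ≤ s) (B : ℝ≥0∞) :
    ENNReal.ofReal (c₁ * s⁻¹) * (ENNReal.ofReal (c₀ * s) + B) ≤
      ENNReal.ofReal c₁ * (ENNReal.ofReal c₀ + B) := by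
  have hs₀ : 0 < s := zero_lt_one.trans_le hs
  rw [mul_add, mul_add, ← ENNReal.ofReal_mul (by positivity), ← ENNReal.ofReal_mul hc₁,
    show c₁ * s⁻¹ * (c₀ * s) = c₁ * c₀ by field_simp]
  gcongr
  exact mul_le_of_le_one_right hc₁ (inv_le_one_of_one_le₀ hs)

theorem uniform_sobolev_from_growth_and_relaxation_general
    (N : ℕ) (k : ℝ)
    (M : Rn N → ℝ) (hMint : Integrable M)
    (hMk : fHnorm N k M < ⊤) (hMbig : fHnorm N (2 * k + ((N : ℝ) + 1) / 2) M < ⊤)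
    (g : ℝ → Rn N → ℝ) (hgint : ∀ t : ℝ, 0 ≤ t → Integrable (g t))
    (C₀ C₁ : ℝ) (hC₁ : 0 < C₁)
    (hgrow : ∀ t : ℝ, 0 ≤ t →
      fHnorm N (2 * k + ((N : ℝ) + 1) / 2) (g t) ≤ ENNReal.ofReal (C₀ * (1 + t)))
    (hrelax : ∀ t : ℝ, 0 ≤ t →
      (∫⁻ v : Rn N, ENNReal.ofReal |g t v - M v|) ≤ ENNReal.ofReal (C₁ * (1 + t)⁻¹)) :
    ∃ C : ℝ, 0 < C ∧ ∀ t : ℝ, 0 ≤ t → fHnorm N k (g t) ≤ ENNReal.ofReal C := by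
  set b := 2 * k + ((N : ℝ) + 1) / 2
  set a := -(((N : ℝ) + 1) / 2)
  set K := eLpNorm (fun ξ : Rn N => (1 + ‖ξ‖ ^ 2) ^ (a / 2)) 2 volume
  have hK : K < ⊤ := eLpNorm_one_add_norm_sq_rpow_lt_top volume <| by
    simp only [finrank_euclideanSpace, Fintype.card_fin, a]
    linarith
  set D := K * (ENNReal.ofReal C₁ * (ENNReal.ofReal C₀ + fHnorm N b M))
  have hdiff : ∀ t, 0 ≤ t → fHnorm N k (g t - M) ^ 2 ≤ D := by
    intro t ht
    calc fHnorm N k (g t - M) ^ 2 ≤ fHnorm N a (g t - M) * fHnorm N b (g t - M) :=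
          fHnorm_sq_le_mul (by simp only [a, b]; ring) ((hgint t ht).sub hMint)
      _ ≤ K * ENNReal.ofReal (C₁ * (1 + t)⁻¹) *
            (ENNReal.ofReal (C₀ * (1 + t)) + fHnorm N b M) := by
          gcongr
          · exact (fHnorm_le_mul_lintegral_abs a _).trans (mul_le_mul_right (hrelax t ht) K)
          · exact (fHnorm_sub_le b (hgint t ht) hMint).trans (add_le_add_left (hgrow t ht) _)
      _ ≤ D := by
          rw [mul_assoc]
          exact mul_le_mul_right (ofReal_mul_inv_mul_add_le hC₁.le (by linarith) _) K
  have hD : D < ⊤ := by finiteness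
  refine ⟨(D ^ (2⁻¹ : ℝ) + fHnorm N k M).toReal + 1, by positivity, fun t ht => ?_⟩
  calc fHnorm N k (g t) ≤ fHnorm N k (g t - M) + fHnorm N k M := by
        simpa using fHnorm_add_le k ((hgint t ht).sub hMint) hMint
    _ ≤ D ^ (2⁻¹ : ℝ) + fHnorm N k M := by
        gcongr
        exact (ENNReal.le_rpow_inv_iff two_pos).2 (by exact_mod_cast hdiff t ht)
    _ ≤ ENNReal.ofReal ((D ^ (2⁻¹ : ℝ) + fHnorm N k M).toReal + 1) :=
        (ENNReal.le_ofReal_iff_toReal_le (by finiteness) (by positivity)).2 (by linarith)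

/-- **Uniform Sobolev bound from linear higher-Sobolev growth plus algebraic `L¹`
relaxation** (Fourier form): if `‖g(t)‖_{H^{2k+(N+1)/2}} ≤ C₀(1+t)` and
`‖g(t) - M‖_{L¹} ≤ C₁(1+t)⁻¹` with `M` having finite `H^k` and `H^{2k+(N+1)/2}` norms,
then `‖g(t)‖_{H^k}` is bounded uniformly in time. -/
theorem uniform_sobolev_from_growth_and_relaxation
    (N : ℕ) (hN : 1 ≤ N) (k : ℝ) (hk : 0 ≤ k)
    (M : Rn N → ℝ) (hMint : Integrable M)
    (hMk : fHnorm N k M < ⊤) (hMbig : fHnorm N (2 * k + ((N : ℝ) + 1) / 2) M < ⊤)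
    (g : ℝ → Rn N → ℝ) (hgint : ∀ t : ℝ, 0 ≤ t → Integrable (g t))
    (C₀ C₁ : ℝ) (hC₀ : 0 < C₀) (hC₁ : 0 < C₁)
    (hgrow : ∀ t : ℝ, 0 ≤ t →
      fHnorm N (2 * k + ((N : ℝ) + 1) / 2) (g t) ≤ ENNReal.ofReal (C₀ * (1 + t)))
    (hrelax : ∀ t : ℝ, 0 ≤ t →
      (∫⁻ v : Rn N, ENNReal.ofReal |g t v - M v|) ≤ ENNReal.ofReal (C₁ * (1 + t)⁻¹)) :
    ∃ C : ℝ, 0 < C ∧ ∀ t : ℝ, 0 ≤ t → fHnorm N k (g t) ≤ ENNReal.ofReal C :=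
  uniform_sobolev_from_growth_and_relaxation_general N k M hMint hMk hMbig g hgint C₀ C₁ hC₁ hgrow
    hrelax
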